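/- Fix an integer d ≥ 2, a real r ≥ d+1 and μ > 0. Then the function L belongs to L²(ℝ^d), i.e. ∫_{ℝ^d} L(x)² dx < ∞. -/

import Mathlib

open MeasureTheory
open scoped ENNReal

/-- The auxiliary function
`L(x) := ∫₀^∞ e^{−μt} t^{r−3/4} (t^{−3d/4}+t^{−3d/8})
  [(|x|²+t²)^{−(d+1)/8} + (|x|²+t²)^{−(d+2)/16}] e^{−√(|x|²+t²)/4} dt`. -/
noncomputable def Lfun (d : ℕ) (r μ : ℝ) (x : EuclideanSpace ℝ (Fin d)) : ℝ≥0∞ :=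
  ∫⁻ t in Set.Ioi (0 : ℝ), ENNReal.ofReal
    (Real.exp (-μ * t) * t ^ (r - 3 / 4) *
      (t ^ (-(3 * (d : ℝ)) / 4) + t ^ (-(3 * (d : ℝ)) / 8)) *
      ((‖x‖ ^ 2 + t ^ 2) ^ (-((d : ℝ) + 1) / 8) +
        (‖x‖ ^ 2 + t ^ 2) ^ (-((d : ℝ) + 2) / 16)) *
      Real.exp (-Real.sqrt (‖x‖ ^ 2 + t ^ 2) / 4))

lemma Lkey_pow_le_factorial_mul_exp (u : ℝ) (hu : 0 ≤ u) (n : ℕ) :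
    u ^ n ≤ (Nat.factorial n : ℝ) * Real.exp u := by
  have h1 : u ^ n / (Nat.factorial n : ℝ) ≤ ∑ i ∈ Finset.range (n + 1), u ^ i / (Nat.factorial i : ℝ) := by
    refine Finset.single_le_sum (f := fun i => u ^ i / (Nat.factorial i : ℝ)) (fun i _ => by positivity)
      (Finset.self_mem_range_succ n)
  have h2 := Real.sum_le_exp_of_nonneg hu (n + 1)
  have hn : (0 : ℝ) < (Nat.factorial n : ℝ) := by positivity
  have h3 := h1.trans h2
  rw [div_le_iff₀ hn] at h3
  linarith

lemma Lkey_exp_le (n : ℕ) (u : ℝ) (hu : 0 ≤ u) :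
    Real.exp (-u / 4) ≤ (4 ^ n * (Nat.factorial n : ℝ) * 3) * (1 + u) ^ (-(n : ℝ)) := by
  have h1u : (0 : ℝ) < 1 + u := by linarith
  have key : (1 + u) ^ n ≤ (4 ^ n * (Nat.factorial n : ℝ) * 3) * Real.exp (u / 4) := by
    have h := Lkey_pow_le_factorial_mul_exp ((1 + u) / 4) (by positivity) n
    have he : Real.exp ((1 + u) / 4) = Real.exp (1 / 4) * Real.exp (u / 4) := by
      rw [← Real.exp_add]; ring_nf
    have h3 : Real.exp (1 / 4 : ℝ) ≤ 3 := by
      have := Real.exp_one_lt_d9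
      have h4 : Real.exp (1 / 4 : ℝ) ≤ Real.exp 1 := Real.exp_le_exp.2 (by norm_num)
      linarith
    have hpow : ((1 + u) / 4) ^ n = (1 + u) ^ n / 4 ^ n := div_pow _ _ _
    rw [hpow, he] at h
    have h4 : (0 : ℝ) < 4 ^ n := by positivity
    rw [div_le_iff₀ h4] at h
    have hexp : (0 : ℝ) < Real.exp (u / 4) := Real.exp_pos _
    have hfac : (0 : ℝ) < (Nat.factorial n : ℝ) := by positivity
    calc (1 + u) ^ n ≤ (Nat.factorial n : ℝ) * (Real.exp (1 / 4) * Real.exp (u / 4)) * 4 ^ n := h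
      _ ≤ (Nat.factorial n : ℝ) * (3 * Real.exp (u / 4)) * 4 ^ n := by gcongr
      _ = 4 ^ n * (Nat.factorial n : ℝ) * 3 * Real.exp (u / 4) := by ring
  have hmul := mul_le_mul_of_nonneg_right key (Real.exp_pos (-u / 4)).le
  have hee : Real.exp (u / 4) * Real.exp (-u / 4) = 1 := by
    rw [← Real.exp_add, show u / 4 + -u / 4 = 0 by ring, Real.exp_zero]
  rw [mul_assoc, hee, mul_one] at hmul
  have hpn : (0 : ℝ) < (1 + u) ^ n := by positivity
  rw [Real.rpow_neg h1u.le, Real.rpow_natCast]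
  calc Real.exp (-u / 4) = ((1 + u) ^ n)⁻¹ * ((1 + u) ^ n * Real.exp (-u / 4)) := by
        field_simp
    _ ≤ ((1 + u) ^ n)⁻¹ * (4 ^ n * (Nat.factorial n : ℝ) * 3) := by gcongr
    _ = (4 ^ n * (Nat.factorial n : ℝ) * 3) * ((1 + u) ^ n)⁻¹ := by ring

lemma Lkey_spatial {d : ℕ} (hd : 2 ≤ d) :
    (∫⁻ x : EuclideanSpace ℝ (Fin d), ENNReal.ofReal (Real.exp (-‖x‖ / 4))) < ⊤ := by
  set n : ℕ := d + 1 with hn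
  have hfin : (∫⁻ x : EuclideanSpace ℝ (Fin d),
      ENNReal.ofReal ((1 + ‖x‖) ^ (-(n : ℝ)))) < ⊤ := by
    apply finite_integral_one_add_norm
    rw [finrank_euclideanSpace_fin]
    rw [hn]; push_cast; linarith
  calc (∫⁻ x : EuclideanSpace ℝ (Fin d), ENNReal.ofReal (Real.exp (-‖x‖ / 4)))
      ≤ ∫⁻ x : EuclideanSpace ℝ (Fin d),
          ENNReal.ofReal ((4 : ℝ) ^ n * (Nat.factorial n : ℝ) * 3) * ENNReal.ofReal ((1 + ‖x‖) ^ (-(n : ℝ))) := by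
        refine lintegral_mono fun x => ?_
        rw [← ENNReal.ofReal_mul (by positivity)]
        exact ENNReal.ofReal_le_ofReal (Lkey_exp_le n ‖x‖ (norm_nonneg x))
    _ = ENNReal.ofReal ((4 : ℝ) ^ n * (Nat.factorial n : ℝ) * 3) *
          ∫⁻ x : EuclideanSpace ℝ (Fin d), ENNReal.ofReal ((1 + ‖x‖) ^ (-(n : ℝ))) :=
        lintegral_const_mul' _ _ ENNReal.ofReal_ne_top
    _ < ⊤ := ENNReal.mul_lt_top ENNReal.ofReal_lt_top hfin

theorem Lfun_memL2 {d : ℕ} (hd : 2 ≤ d) (r μ : ℝ) (hr : (d : ℝ) + 1 ≤ r) (hμ : 0 < μ) :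
    (∫⁻ x : EuclideanSpace ℝ (Fin d), Lfun d r μ x ^ 2) < ⊤ := by
  have hd' : (2 : ℝ) ≤ (d : ℝ) := by exact_mod_cast hd
  set c : ℝ := μ + 1 / 8 with hc
  have hcpos : 0 < c := by rw [hc]; linarith
  -- the time-profile majorant
  set g : ℝ → ℝ := fun t =>
    Real.exp (-c * t) * t ^ (r - 3 / 4) *
      (t ^ (-(3 * (d : ℝ)) / 4) + t ^ (-(3 * (d : ℝ)) / 8)) *
      (t ^ (2 * (-((d : ℝ) + 1) / 8)) + t ^ (2 * (-((d : ℝ) + 2) / 16))) with hg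
  -- integrability of each Gamma-type piece
  have base : ∀ a : ℝ, -1 < a →
      IntegrableOn (fun t : ℝ => t ^ a * Real.exp (-c * t)) (Set.Ioi 0) := by
    intro a ha
    have := integrableOn_rpow_mul_exp_neg_mul_rpow ha (p := 1) one_pos hcpos
    simpa [Real.rpow_one] using this
  have hgInt : IntegrableOn g (Set.Ioi 0) := by
    have e1 : -1 < r - 3 / 4 + -(3 * (d : ℝ)) / 4 + 2 * (-((d : ℝ) + 1) / 8) := by linarith
    have e2 : -1 < r - 3 / 4 + -(3 * (d : ℝ)) / 4 + 2 * (-((d : ℝ) + 2) / 16) := by linarith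
    have e3 : -1 < r - 3 / 4 + -(3 * (d : ℝ)) / 8 + 2 * (-((d : ℝ) + 1) / 8) := by linarith
    have e4 : -1 < r - 3 / 4 + -(3 * (d : ℝ)) / 8 + 2 * (-((d : ℝ) + 2) / 16) := by linarith
    have hsum := (((base _ e1).add (base _ e2)).add ((base _ e3).add (base _ e4)))
    refine MeasureTheory.IntegrableOn.congr_fun hsum (fun t ht => ?_) measurableSet_Ioi
    have ht' : (0 : ℝ) < t := ht
    simp only [hg, Pi.add_apply]
    rw [Real.rpow_add ht', Real.rpow_add ht', Real.rpow_add ht', Real.rpow_add ht',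
      Real.rpow_add ht', Real.rpow_add ht', Real.rpow_add ht', Real.rpow_add ht']
    ring
  set G : ℝ≥0∞ := ∫⁻ t in Set.Ioi (0 : ℝ), ENNReal.ofReal (g t) with hG
  have hGfin : G < ⊤ := hgInt.setLIntegral_lt_top
  -- pointwise bound on Lfun
  have hL : ∀ x : EuclideanSpace ℝ (Fin d),
      Lfun d r μ x ≤ ENNReal.ofReal (Real.exp (-‖x‖ / 8)) * G := by
    intro x
    have step : Lfun d r μ x ≤
        ∫⁻ t in Set.Ioi (0 : ℝ), ENNReal.ofReal (Real.exp (-‖x‖ / 8) * g t) := by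
      rw [Lfun]
      refine setLIntegral_mono' measurableSet_Ioi fun t ht => ?_
      have ht' : (0 : ℝ) < t := ht
      refine ENNReal.ofReal_le_ofReal ?_
      have hpow : ∀ e : ℝ, e ≤ 0 → (‖x‖ ^ 2 + t ^ 2) ^ e ≤ t ^ (2 * e) := by
        intro e he
        have h2 : (0 : ℝ) < t ^ 2 := by positivity
        calc (‖x‖ ^ 2 + t ^ 2) ^ e ≤ (t ^ 2) ^ e :=
              Real.rpow_le_rpow_of_nonpos h2
                (le_add_of_nonneg_left (by positivity : (0 : ℝ) ≤ ‖x‖ ^ 2)) he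
          _ = t ^ (2 * e) := by
              rw [← Real.rpow_natCast t 2, ← Real.rpow_mul ht'.le]
              norm_num
      have hC : (‖x‖ ^ 2 + t ^ 2) ^ (-((d : ℝ) + 1) / 8) +
          (‖x‖ ^ 2 + t ^ 2) ^ (-((d : ℝ) + 2) / 16) ≤
          t ^ (2 * (-((d : ℝ) + 1) / 8)) + t ^ (2 * (-((d : ℝ) + 2) / 16)) := by
        refine add_le_add (hpow _ (by linarith)) (hpow _ (by linarith))
      have hE : Real.exp (-Real.sqrt (‖x‖ ^ 2 + t ^ 2) / 4) ≤
          Real.exp (-‖x‖ / 8) * Real.exp (-(t / 8)) := by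
        rw [← Real.exp_add]
        refine Real.exp_le_exp.2 ?_
        have hs : (0 : ℝ) ≤ ‖x‖ ^ 2 + t ^ 2 := by positivity
        have h2 : ‖x‖ + t ≤ 2 * Real.sqrt (‖x‖ ^ 2 + t ^ 2) := by
          have h4 : ‖x‖ + t ≤ Real.sqrt (4 * (‖x‖ ^ 2 + t ^ 2)) := by
            refine Real.le_sqrt_of_sq_le ?_
            nlinarith [sq_nonneg (‖x‖ - t)]
          rwa [show (4 : ℝ) * (‖x‖ ^ 2 + t ^ 2) = 2 ^ 2 * (‖x‖ ^ 2 + t ^ 2) by ring,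
            Real.sqrt_mul (by positivity), Real.sqrt_sq (by norm_num : (0:ℝ) ≤ 2)] at h4
        linarith
      have hstep : Real.exp (-μ * t) * t ^ (r - 3 / 4) *
            (t ^ (-(3 * (d : ℝ)) / 4) + t ^ (-(3 * (d : ℝ)) / 8)) *
            ((‖x‖ ^ 2 + t ^ 2) ^ (-((d : ℝ) + 1) / 8) +
              (‖x‖ ^ 2 + t ^ 2) ^ (-((d : ℝ) + 2) / 16)) *
            Real.exp (-Real.sqrt (‖x‖ ^ 2 + t ^ 2) / 4) ≤
          Real.exp (-μ * t) * t ^ (r - 3 / 4) *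
            (t ^ (-(3 * (d : ℝ)) / 4) + t ^ (-(3 * (d : ℝ)) / 8)) *
            (t ^ (2 * (-((d : ℝ) + 1) / 8)) + t ^ (2 * (-((d : ℝ) + 2) / 16))) *
            (Real.exp (-‖x‖ / 8) * Real.exp (-(t / 8))) := by
        have hne : (0 : ℝ) ≤ Real.exp (-μ * t) * t ^ (r - 3 / 4) *
            (t ^ (-(3 * (d : ℝ)) / 4) + t ^ (-(3 * (d : ℝ)) / 8)) := by positivity
        refine mul_le_mul (mul_le_mul_of_nonneg_left hC hne) hE (by positivity) (by positivity)
      refine hstep.trans (le_of_eq ?_)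
      have : Real.exp (-c * t) = Real.exp (-μ * t) * Real.exp (-(t / 8)) := by
        rw [← Real.exp_add]; congr 1; rw [hc]; ring
      simp only [hg]
      rw [this]; ring
    refine step.trans (le_of_eq ?_)
    calc (∫⁻ t in Set.Ioi (0 : ℝ), ENNReal.ofReal (Real.exp (-‖x‖ / 8) * g t))
        = ∫⁻ t in Set.Ioi (0 : ℝ),
            ENNReal.ofReal (Real.exp (-‖x‖ / 8)) * ENNReal.ofReal (g t) := by
          simp_rw [ENNReal.ofReal_mul (Real.exp_nonneg _)]
      _ = ENNReal.ofReal (Real.exp (-‖x‖ / 8)) * G :=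
          lintegral_const_mul' _ _ ENNReal.ofReal_ne_top
  -- assemble
  calc (∫⁻ x : EuclideanSpace ℝ (Fin d), Lfun d r μ x ^ 2)
      ≤ ∫⁻ x : EuclideanSpace ℝ (Fin d),
          (ENNReal.ofReal (Real.exp (-‖x‖ / 8)) * G) ^ 2 := by
        refine lintegral_mono fun x => ?_
        gcongr
        exact hL x
    _ = ∫⁻ x : EuclideanSpace ℝ (Fin d),
          ENNReal.ofReal (Real.exp (-‖x‖ / 4)) * G ^ 2 := by
        refine lintegral_congr fun x => ?_
        rw [mul_pow, ← ENNReal.ofReal_pow (Real.exp_nonneg _)]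
        congr 2
        rw [sq, ← Real.exp_add]
        congr 1
        ring
    _ = (∫⁻ x : EuclideanSpace ℝ (Fin d), ENNReal.ofReal (Real.exp (-‖x‖ / 4))) * G ^ 2 :=
        lintegral_mul_const' _ _ (by exact ENNReal.pow_ne_top hGfin.ne)
    _ < ⊤ := ENNReal.mul_lt_top (Lkey_spatial hd) (ENNReal.pow_lt_top hGfin)
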